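/- If instruments I (from H to H₁) and J (from H to H₂) coexist and P is a post-processing of I given by P_z = Σ_x λ_{xz} I_x where λ_{xz} ∈ [0,1] with Σ_z λ_{xz} = 1 for every x, then P and J coexist. -/

import Mathlib

open Matrix BigOperators
open scoped ComplexOrder Kronecker

noncomputable section

/-- Square matrices over ℂ indexed by `ι`, modelling `L(H)` for a f.d. Hilbert space. -/
abbrev Mat (ι : Type) := Matrix ι ι ℂ

/-- The extension `Φ ⊗ id_k` of a linear map on matrices. -/
def cpExt {ι κ : Type} [Fintype ι] [Fintype κ]
    (Φ : Mat ι →ₗ[ℂ] Mat κ) (k : ℕ)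
    (A : Mat (ι × Fin k)) : Mat (κ × Fin k) :=
  Matrix.of fun x y => Φ (Matrix.of fun p q => A (p, x.2) (q, y.2)) x.1 y.1

/-- Complete positivity. -/
def IsCP {ι κ : Type} [Fintype ι] [Fintype κ] (Φ : Mat ι →ₗ[ℂ] Mat κ) : Prop :=
  ∀ (k : ℕ) (A : Mat (ι × Fin k)), A.PosSemidef → (cpExt Φ k A).PosSemidef

/-- Trace non-increasing (on positive operators). -/
def IsTNI {ι κ : Type} [Fintype ι] [Fintype κ] (Φ : Mat ι →ₗ[ℂ] Mat κ) : Prop :=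
  ∀ A : Mat ι, A.PosSemidef → (Φ A).trace ≤ A.trace

/-- An operation: completely positive and trace non-increasing. -/
def IsOperation {ι κ : Type} [Fintype ι] [Fintype κ] (Φ : Mat ι →ₗ[ℂ] Mat κ) : Prop :=
  IsCP Φ ∧ IsTNI Φ

/-- A channel: completely positive and trace preserving. -/
def IsChannel {ι κ : Type} [Fintype ι] [Fintype κ] (Φ : Mat ι →ₗ[ℂ] Mat κ) : Prop :=
  IsCP Φ ∧ ∀ A : Mat ι, (Φ A).trace = A.trace

/-- A state (density operator). -/
def IsState {ι : Type} [Fintype ι] (ρ : Mat ι) : Prop :=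
  ρ.PosSemidef ∧ ρ.trace = 1

/-- `Ψ` is the dual of `Φ`: `tr[B Ψ(A)] = tr[Φ(B) A]`. -/
def IsDual {ι κ : Type} [Fintype ι] [Fintype κ]
    (Φ : Mat ι →ₗ[ℂ] Mat κ) (Ψ : Mat κ →ₗ[ℂ] Mat ι) : Prop :=
  ∀ (B : Mat ι) (A : Mat κ), (B * Ψ A).trace = (Φ B * A).trace

/-- Partial trace over the second factor. -/
def ptraceR {ι κ : Type} [Fintype κ] (A : Mat (ι × κ)) : Mat ι :=
  Matrix.of fun i j => ∑ b, A (i, b) (j, b)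

/-- Partial trace over the first factor. -/
def ptraceL {ι κ : Type} [Fintype ι] (A : Mat (ι × κ)) : Mat κ :=
  Matrix.of fun a b => ∑ i, A (i, a) (i, b)

/-- A (finite) instrument: each component is an operation and the sum is trace preserving. -/
def IsInstrument {ι κ Ω : Type} [Fintype ι] [Fintype κ] [Fintype Ω]
    (I : Ω → (Mat ι →ₗ[ℂ] Mat κ)) : Prop :=
  (∀ x, IsCP (I x)) ∧ (∀ x, IsTNI (I x)) ∧ ∀ A : Mat ι, (∑ x, I x A).trace = A.trace

/-- Coexistence of two instruments with common input space. -/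
def Coexist {ι κ₁ κ₂ Ω₁ Ω₂ : Type} [Fintype ι] [Fintype κ₁] [Fintype κ₂]
    [Fintype Ω₁] [Fintype Ω₂]
    (I : Ω₁ → (Mat ι →ₗ[ℂ] Mat κ₁)) (J : Ω₂ → (Mat ι →ₗ[ℂ] Mat κ₂)) : Prop :=
  ∃ K : Ω₁ × Ω₂ → (Mat ι →ₗ[ℂ] Mat (κ₁ × κ₂)),
    IsInstrument K ∧
    (∀ x ρ, IsState ρ → ∑ y, ptraceR (K (x, y) ρ) = I x ρ) ∧
    (∀ y ρ, IsState ρ → ∑ x, ptraceL (K (x, y) ρ) = J y ρ)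

/-!
Post-processing the first outcome of a joint instrument `K` of `I` and `J`, i.e.
`K'(z, y) = Σₓ λ(x, z) K(x, y)`, gives a joint instrument of `P` and `J`. Its first marginal is the
post-processing of the first marginal of `K`, and because each row of `λ` sums to one, summing
over `z` recovers `K` itself, so the second marginal and the total trace are unchanged.
Complete positivity survives nonnegative combinations, and trace non-increase of each component
follows from positivity and trace preservation of the sum.
-/

section CompletePositivity

variable {ι κ : Type} [Fintype ι] [Fintype κ]

lemma cpExt_sum_smul {Ω : Type} [Fintype Ω] (c : Ω → ℂ) (Φ : Ω → (Mat ι →ₗ[ℂ] Mat κ)) (k : ℕ)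
    (A : Mat (ι × Fin k)) : cpExt (∑ x, c x • Φ x) k A = ∑ x, c x • cpExt (Φ x) k A := by
  ext
  simp [cpExt, Matrix.sum_apply]

lemma isCP_sum_smul {Ω : Type} [Fintype Ω] {c : Ω → ℂ} (hc : ∀ x, 0 ≤ c x)
    {Φ : Ω → (Mat ι →ₗ[ℂ] Mat κ)} (hΦ : ∀ x, IsCP (Φ x)) : IsCP (∑ x, c x • Φ x) := by
  intro k A hA
  rw [cpExt_sum_smul]
  exact posSemidef_sum _ fun x _ => (hΦ x k A hA).smul (hc x)

lemma IsCP.posSemidef_apply {Φ : Mat ι →ₗ[ℂ] Mat κ} (hΦ : IsCP Φ) {A : Mat ι}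
    (hA : A.PosSemidef) : (Φ A).PosSemidef := by
  -- `Φ A` is a corner of `cpExt Φ 1` applied to `A ⊗ 1`
  have := hΦ 1 (A.submatrix Prod.fst Prod.fst) (hA.submatrix _)
  exact this.submatrix (fun a : κ => (a, (0 : Fin 1)))

lemma isInstrument_of_isCP_of_trace_sum {Ω : Type} [Fintype Ω] {Φ : Ω → (Mat ι →ₗ[ℂ] Mat κ)}
    (hΦ : ∀ x, IsCP (Φ x)) (htr : ∀ A, (∑ x, Φ x A).trace = A.trace) : IsInstrument Φ := by
  refine ⟨hΦ, fun x A hA => ?_, htr⟩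
  rw [← htr A, trace_sum]
  exact Finset.single_le_sum (fun y _ => ((hΦ y).posSemidef_apply hA).trace_nonneg)
    (Finset.mem_univ x)

end CompletePositivity

section PartialTrace

variable {ι κ Ω : Type}

lemma ptraceR_sum [Fintype κ] (s : Finset Ω) (A : Ω → Mat (ι × κ)) :
    ptraceR (∑ x ∈ s, A x) = ∑ x ∈ s, ptraceR (A x) := by
  ext
  simp only [ptraceR, Matrix.sum_apply, Matrix.of_apply]
  exact Finset.sum_comm

lemma ptraceR_smul [Fintype κ] (c : ℂ) (A : Mat (ι × κ)) : ptraceR (c • A) = c • ptraceR A := by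
  ext
  simp [ptraceR, Finset.mul_sum]

lemma ptraceL_sum [Fintype ι] (s : Finset Ω) (A : Ω → Mat (ι × κ)) :
    ptraceL (∑ x ∈ s, A x) = ∑ x ∈ s, ptraceL (A x) := by
  ext
  simp only [ptraceL, Matrix.sum_apply, Matrix.of_apply]
  exact Finset.sum_comm

end PartialTrace

section PostProcessing

variable {ι κ Ω Ω' : Type} [Fintype Ω]

def postProcess (l : Ω → Ω' → ℝ) (I : Ω → (Mat ι →ₗ[ℂ] Mat κ)) : Ω' → (Mat ι →ₗ[ℂ] Mat κ) :=
  fun z => ∑ x, (l x z : ℂ) • I x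

lemma postProcess_apply (l : Ω → Ω' → ℝ) (I : Ω → (Mat ι →ₗ[ℂ] Mat κ)) (z : Ω') (A : Mat ι) :
    postProcess l I z A = ∑ x, (l x z : ℂ) • I x A := by
  simp [postProcess]

lemma sum_postProcess_apply [Fintype Ω'] {l : Ω → Ω' → ℝ} (hl : ∀ x, ∑ z, l x z = 1)
    (I : Ω → (Mat ι →ₗ[ℂ] Mat κ)) (A : Mat ι) : ∑ z, postProcess l I z A = ∑ x, I x A := by
  simp only [postProcess_apply]
  rw [Finset.sum_comm]
  refine Finset.sum_congr rfl fun x _ => ?_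
  rw [← Finset.sum_smul, ← Complex.ofReal_sum, hl x, Complex.ofReal_one, one_smul]

lemma isCP_postProcess [Fintype ι] [Fintype κ] {l : Ω → Ω' → ℝ} (hl : ∀ x z, 0 ≤ l x z)
    {I : Ω → (Mat ι →ₗ[ℂ] Mat κ)} (hI : ∀ x, IsCP (I x)) (z : Ω') : IsCP (postProcess l I z) :=
  isCP_sum_smul (fun x => Complex.zero_le_real.mpr (hl x z)) hI

end PostProcessing

theorem post_processing_coexists_general {ι κ₁ κ₂ Ω₁ Ω₂ Ω₃ : Type}
    [Fintype ι] [Fintype κ₁]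
    [Fintype κ₂] [Fintype Ω₁] [Fintype Ω₂] [Fintype Ω₃]
    (I : Ω₁ → (Mat ι →ₗ[ℂ] Mat κ₁)) (J : Ω₂ → (Mat ι →ₗ[ℂ] Mat κ₂))
    (hco : Coexist I J)
    (l : Ω₁ → Ω₃ → ℝ) (hl0 : ∀ x z, 0 ≤ l x z)
    (hlsum : ∀ x, ∑ z, l x z = 1)
    (P : Ω₃ → (Mat ι →ₗ[ℂ] Mat κ₁))
    (hP : ∀ z, P z = ∑ x, (l x z : ℂ) • I x) :
    Coexist P J := by
  obtain ⟨K, ⟨hKcp, -, hKtr⟩, hKI, hKJ⟩ := hco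
  obtain rfl : P = postProcess l I := funext hP
  let K' : Ω₃ × Ω₂ → (Mat ι →ₗ[ℂ] Mat (κ₁ × κ₂)) := fun p => postProcess l (K ⟨·, p.2⟩) p.1
  refine ⟨K', isInstrument_of_isCP_of_trace_sum (fun p => isCP_postProcess hl0 (hKcp ⟨·, p.2⟩) _)
    fun A => ?_, fun z ρ hρ => ?_, fun y ρ hρ => ?_⟩
  · simpa only [K', Fintype.sum_prod_type_right, sum_postProcess_apply hlsum] using hKtr A
  · simp only [K', postProcess_apply, ptraceR_sum, ptraceR_smul]
    rw [Finset.sum_comm]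
    simp only [← Finset.smul_sum, hKI _ ρ hρ]
  · rw [← hKJ y ρ hρ, ← ptraceL_sum, ← ptraceL_sum]
    exact congrArg ptraceL (sum_postProcess_apply hlsum (K ⟨·, y⟩) ρ)

theorem post_processing_coexists {ι κ₁ κ₂ Ω₁ Ω₂ Ω₃ : Type}
    [Fintype ι] [DecidableEq ι] [Fintype κ₁] [DecidableEq κ₁]
    [Fintype κ₂] [DecidableEq κ₂] [Fintype Ω₁] [Fintype Ω₂] [Fintype Ω₃]
    (I : Ω₁ → (Mat ι →ₗ[ℂ] Mat κ₁)) (J : Ω₂ → (Mat ι →ₗ[ℂ] Mat κ₂))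
    (hI : IsInstrument I) (hJ : IsInstrument J) (hco : Coexist I J)
    (l : Ω₁ → Ω₃ → ℝ) (hl0 : ∀ x z, 0 ≤ l x z) (hl1 : ∀ x z, l x z ≤ 1)
    (hlsum : ∀ x, ∑ z, l x z = 1)
    (P : Ω₃ → (Mat ι →ₗ[ℂ] Mat κ₁))
    (hP : ∀ z, P z = ∑ x, (l x z : ℂ) • I x) :
    Coexist P J :=
  post_processing_coexists_general I J hco l hl0 hlsum P hP
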